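/- Let λ be an admissible (p−1)-form on M (1 ≤ p ≤ n) and let Γ be the graph of a smooth solution x ↦ (q(x),p(x)) of the generalized Hamilton equations (−1)ⁿ (∂(q,p)/∂(x¹,…,xⁿ)) ⨼ Ω = dH mod ℐ. Then the exterior differential of λ restricted to Γ equals the ω-bracket restricted to Γ: dλ|_Γ = {Hω, λ}_ω |_Γ. -/

import Mathlib

open scoped BigOperators

noncomputable section

/-- Increasing multi-indices `μ₁ < … < μₙ` in `{1,…,N}`, encoded as `n`-element subsets. -/
abbrev MultiIdx (N n : ℕ) : Type := {s : Finset (Fin N) // s.card = n}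

/-- `μ_a` : the `a`-th element (in increasing order) of the multi-index `s`. -/
def midx {N n : ℕ} (s : MultiIdx N n) (a : Fin n) : Fin N :=
  ((s.1.orderIsoOfFin s.2) a : Fin N)

/-- The multimomentum phase space `M = ℝ^{n+k} × Λⁿ(ℝ^{n+k})*`, with coordinates
`(q^μ, p_{μ₁…μₙ})`. -/
abbrev Phase (n k : ℕ) : Type := (Fin (n + k) → ℝ) × (MultiIdx (n + k) n → ℝ)

/-- Evaluation of the Cartan–Poincaré form `θ = Σ_{μ₁<…<μₙ} p_{μ₁…μₙ} dq^{μ₁}∧…∧dq^{μₙ}`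
on an `n`-tuple of tangent vectors of `M`. -/
def thetaEval (n k : ℕ) (m : Phase n k) (w : Fin n → Phase n k) : ℝ :=
  ∑ s : MultiIdx (n + k) n,
    m.2 s * Matrix.det (Matrix.of fun a b : Fin n => (w b).1 (midx s a))

/-- Evaluation of the pataplectic form
`Ω = dθ = Σ_{μ₁<…<μₙ} dp_{μ₁…μₙ} ∧ dq^{μ₁}∧…∧dq^{μₙ}` on an `(n+1)`-tuple of tangent
vectors of `M` (each summand is the determinant of the matrix of the coordinates
`(p_{μ₁…μₙ}, q^{μ₁}, …, q^{μₙ})` of the `n+1` vectors). -/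
def OmegaEval (n k : ℕ) (w : Fin (n + 1) → Phase n k) : ℝ :=
  ∑ s : MultiIdx (n + k) n,
    Matrix.det (Matrix.of fun a b : Fin (n + 1) =>
      (Fin.cons ((w b).2 s) (fun j : Fin n => (w b).1 (midx s j)) : Fin (n+1) → ℝ) a)

/-- Evaluation of the volume form `ω = dx¹ ∧ … ∧ dxⁿ` on tangent vectors of `M`. -/
def volEval (n k : ℕ) (w : Fin n → Phase n k) : ℝ :=
  Matrix.det (Matrix.of fun a b : Fin n => (w b).1 (Fin.castAdd k a))

/-- Evaluation formula for the exterior differential of a `p`-form `φ` (given by its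
evaluation function):
`dφ(x)(w₀,…,w_p) = Σ_i (−1)^i (∂_{w_i} φ)(x)(w₀,…,ŵ_i,…,w_p)`. -/
def dEval {E : Type*} [NormedAddCommGroup E] [NormedSpace ℝ E] {p : ℕ}
    (φ : E → (Fin p → E) → ℝ) (m : E) (w : Fin (p + 1) → E) : ℝ :=
  ∑ i : Fin (p + 1), (-1 : ℝ) ^ (i : ℕ) *
    fderiv ℝ (fun m' => φ m' (w ∘ i.succAbove)) m (w i)

/-- An `n`-vector field on `M`, represented as a (pointwise) sum of `r` decomposable
`n`-vectors `X_{j1} ∧ … ∧ X_{jn}` (every section of `ΛⁿTM` is of this form). -/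
abbrev NVecField (d k r : ℕ) : Type :=
  Phase (d + 1) k → Fin r → Fin (d + 1) → Phase (d + 1) k

/-- `X` is `H`-Hamiltonian: `(−1)ⁿ X ⨼ Ω = dH mod ℐ`. -/
def IsHamiltonian (d k r : ℕ) (H : Phase (d + 1) k → ℝ) (X : NVecField d k r) : Prop :=
  ∀ m : Phase (d + 1) k, ∃ c : Fin (d + 1) → ℝ, ∀ V : Phase (d + 1) k,
    (-1 : ℝ) ^ (d + 1) * ∑ j : Fin r, OmegaEval (d + 1) k (Fin.snoc (X m j) V)
      = fderiv ℝ H m V + ∑ β : Fin (d + 1), c β * V.1 (Fin.castAdd k β)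

/-- Increasing multi-indices `α₁ < … < α_{n-p}` of spacetime indices. -/
abbrev XIdx (d p' : ℕ) : Type := {t : Finset (Fin (d + 1)) // t.card = (d + 1) - (p' + 1)}

/-- The `r`-th element of such a multi-index (noting `(d+1) − (p'+1) = d − p'`). -/
def xidx {d p' : ℕ} (A : XIdx d p') (r : Fin (d - p')) : Fin (d + 1) :=
  ((A.1.orderIsoOfFin (by rw [A.2]; omega)) r : Fin (d + 1))

/-- `dx^{α₁…α_{n−p}} = dx^{α₁} ∧ … ∧ dx^{α_{n−p}}` evaluated on tangent vectors of `M`. -/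
def dxA (d k p' : ℕ) (A : XIdx d p') (u : Fin (d - p') → Phase (d + 1) k) : ℝ :=
  Matrix.det (Matrix.of fun r c : Fin (d - p') => (u c).1 (Fin.castAdd k (xidx A r)))

/-- The `n`-form `dx^{α₁…α_{n−p}} ∧ dλ` (`λ` a `(p−1)`-form, `dλ` its differential),
evaluated at `m` on an `n`-tuple `w` by the usual shuffle formula. -/
def wedgeDxDlam (d k p' : ℕ) (hp : p' ≤ d) (A : XIdx d p')
    (lam : Phase (d + 1) k → AlternatingMap ℝ (Phase (d + 1) k) ℝ (Fin p'))
    (m : Phase (d + 1) k) (w : Fin (d + 1) → Phase (d + 1) k) : ℝ :=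
  (((d - p').factorial : ℝ) * ((p' + 1).factorial : ℝ))⁻¹ *
    ∑ σ : Equiv.Perm (Fin (d + 1)),
      ((Equiv.Perm.sign σ : ℤ) : ℝ) *
        dxA d k p' A (fun i : Fin (d - p') => w (σ ⟨i.1, by omega⟩)) *
        dEval (fun m' u => lam m' u) m
          (fun i : Fin (p' + 1) => w (σ ⟨(d - p') + i.1, by omega⟩))

/-- The constant `p`-form `∂_{α₁…α_{n−p}} ⨼ ω`. -/
def omA (d k p' : ℕ) (hp : p' ≤ d) (A : XIdx d p')
    (v : Fin (p' + 1) → Phase (d + 1) k) : ℝ :=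
  volEval (d + 1) k (fun b : Fin (d + 1) =>
    if hb : b.1 < d - p' then (Pi.single (Fin.castAdd k (xidx A ⟨b.1, hb⟩)) 1, 0)
    else v ⟨b.1 - (d - p'), by omega⟩)

/-- `X ♯ λ := Σ_{α₁<…<α_{n−p}} (X ⨼ (dx^{α₁…α_{n−p}} ∧ dλ)) (∂_{α₁…α_{n−p}} ⨼ ω)`,
a `p`-form. -/
def sharpGen (d k p' r : ℕ) (hp : p' ≤ d) (X : NVecField d k r)
    (lam : Phase (d + 1) k → AlternatingMap ℝ (Phase (d + 1) k) ℝ (Fin p'))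
    (m : Phase (d + 1) k) (v : Fin (p' + 1) → Phase (d + 1) k) : ℝ :=
  ∑ A : XIdx d p',
    (∑ j : Fin r, wedgeDxDlam d k p' hp A lam m (X m j)) * omA d k p' hp A v

/-- `λ` is admissible: for every Hamiltonian `H'` and every `H'`-Hamiltonian `n`-vector
field `X`, `X ♯ λ` does not depend on the choice of `X` but only on `H'`. -/
def Admissible (d k p' : ℕ) (hp : p' ≤ d)
    (lam : Phase (d + 1) k → AlternatingMap ℝ (Phase (d + 1) k) ℝ (Fin p')) : Prop :=
  ∀ H' : Phase (d + 1) k → ℝ, ContDiff ℝ (⊤ : ℕ∞) H' →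
    ∀ (r r' : ℕ) (X : NVecField d k r) (X' : NVecField d k r'),
      IsHamiltonian d k r H' X → IsHamiltonian d k r' H' X' →
      ∀ (m : Phase (d + 1) k) (v : Fin (p' + 1) → Phase (d + 1) k),
        sharpGen d k p' r hp X lam m v = sharpGen d k p' r' hp X' lam m v

section DLam

variable {d k p' : ℕ}

/-- `u ↦ ∂_y (λ(u))(m)` as an alternating map in `u`. -/
def galt (lam : Phase (d + 1) k → AlternatingMap ℝ (Phase (d + 1) k) ℝ (Fin p'))
    (hlam : ∀ v : Fin p' → Phase (d + 1) k, ContDiff ℝ (⊤ : ℕ∞) fun m => lam m v)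
    (m : Phase (d + 1) k) (y : Phase (d + 1) k) :
    AlternatingMap ℝ (Phase (d + 1) k) ℝ (Fin p') where
  toFun u := fderiv ℝ (fun m' => lam m' u) m y
  map_update_add' := by
    intro inst u i a b
    have hsub : inst = instDecidableEqFin p' := Subsingleton.elim _ _
    subst hsub
    show fderiv ℝ (fun m' => lam m' (Function.update u i (a + b))) m y
      = fderiv ℝ (fun m' => lam m' (Function.update u i a)) m y
        + fderiv ℝ (fun m' => lam m' (Function.update u i b)) m y
    have h1 : (fun m' => lam m' (Function.update u i (a + b)))
        = fun m' => lam m' (Function.update u i a) + lam m' (Function.update u i b) := by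
      funext m'
      simp [AlternatingMap.map_update_add]
    rw [h1, fderiv_fun_add (((hlam _).differentiable (by simp)).differentiableAt)
      (((hlam _).differentiable (by simp)).differentiableAt)]
    simp
  map_update_smul' := by
    intro inst u i c a
    have hsub : inst = instDecidableEqFin p' := Subsingleton.elim _ _
    subst hsub
    show fderiv ℝ (fun m' => lam m' (Function.update u i (c • a))) m y
      = c • fderiv ℝ (fun m' => lam m' (Function.update u i a)) m y
    have h1 : (fun m' => lam m' (Function.update u i (c • a)))
        = fun m' => c • lam m' (Function.update u i a) := by
      funext m'
      simp [AlternatingMap.map_update_smul]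
    rw [h1, fderiv_fun_const_smul (((hlam _).differentiable (by simp)).differentiableAt)]
    simp
  map_eq_zero_of_eq' := by
    intro u i j hij hne
    show fderiv ℝ (fun m' => lam m' u) m y = 0
    have h1 : (fun m' => lam m' u) = fun _ => (0 : ℝ) :=
      funext fun m' => (lam m').map_eq_zero_of_eq u hij hne
    rw [h1]
    simp

variable (lam : Phase (d + 1) k → AlternatingMap ℝ (Phase (d + 1) k) ℝ (Fin p'))
    (hlam : ∀ v : Fin p' → Phase (d + 1) k, ContDiff ℝ (⊤ : ℕ∞) fun m => lam m v)
    (m : Phase (d + 1) k)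

@[simp] lemma galt_apply (y : Phase (d + 1) k) (u : Fin p' → Phase (d + 1) k) :
    galt lam hlam m y u = fderiv ℝ (fun m' => lam m' u) m y := rfl

/-- `galt` as a linear map into multilinear maps. -/
def glin : Phase (d + 1) k →ₗ[ℝ] MultilinearMap ℝ (fun _ : Fin p' => Phase (d + 1) k) ℝ where
  toFun y := (galt lam hlam m y).toMultilinearMap
  map_add' y z := by
    ext u
    simp
  map_smul' c y := by
    ext u
    simp

/-- The uncurried multilinear map `z ↦ galt (z 0) (tail z)`. -/
def Gml : MultilinearMap ℝ (fun _ : Fin (p' + 1) => Phase (d + 1) k) ℝ :=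
  LinearMap.uncurryLeft (glin lam hlam m)

lemma Gml_apply (z : Fin (p' + 1) → Phase (d + 1) k) :
    Gml lam hlam m z = galt lam hlam m (z 0) (fun j => z j.succ) := rfl

/-- The exterior differential of `λ` at `m` as an alternating map. -/
def dLamAlt : AlternatingMap ℝ (Phase (d + 1) k) ℝ (Fin (p' + 1)) :=
  ((p'.factorial : ℝ)⁻¹) • MultilinearMap.alternatization (Gml lam hlam m)

end DLam
section DLamApply

variable {d k p' : ℕ}

private def E1 {p' : ℕ} : (Fin 1 ⊕ Fin p') ≃ Fin (p' + 1) :=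
  finSumFinEquiv.trans (finCongr (by omega))

private lemma E1_inl {p' : ℕ} : (E1 (Sum.inl 0) : Fin (p' + 1)) = 0 := by
  apply Fin.ext
  simp [E1]

private lemma E1_inr {p' : ℕ} (j : Fin p') : (E1 (Sum.inr j) : Fin (p' + 1)) = j.succ := by
  apply Fin.ext
  simp [E1, Nat.add_comm]

private def blk1 {p' : ℕ} (ρ : Equiv.Perm (Fin p')) : Equiv.Perm (Fin (p' + 1)) :=
  E1.permCongr (Equiv.sumCongr (Equiv.refl (Fin 1)) ρ)

private lemma blk1_zero {p' : ℕ} (ρ : Equiv.Perm (Fin p')) : blk1 ρ 0 = 0 := by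
  have h : E1.symm (0 : Fin (p' + 1)) = Sum.inl 0 := by
    rw [Equiv.symm_apply_eq]; exact E1_inl.symm
  simp [blk1, Equiv.permCongr_apply, h, E1_inl]

private lemma blk1_succ {p' : ℕ} (ρ : Equiv.Perm (Fin p')) (j : Fin p') :
    blk1 ρ j.succ = (ρ j).succ := by
  have h : E1.symm (j.succ : Fin (p' + 1)) = Sum.inr j := by
    rw [Equiv.symm_apply_eq]; exact (E1_inr j).symm
  simp [blk1, Equiv.permCongr_apply, h, E1_inr]

private lemma sign_blk1 {p' : ℕ} (ρ : Equiv.Perm (Fin p')) :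
    Equiv.Perm.sign (blk1 ρ) = Equiv.Perm.sign ρ := by
  simp [blk1, Equiv.Perm.sign_permCongr, Equiv.Perm.sign_sumCongr]

private def m4 {p' : ℕ} (q : Fin (p' + 1) × Equiv.Perm (Fin p')) : Equiv.Perm (Fin (p' + 1)) :=
  (Fin.cycleRange q.1)⁻¹ * blk1 q.2

private lemma m4_zero {p' : ℕ} (q : Fin (p' + 1) × Equiv.Perm (Fin p')) : m4 q 0 = q.1 := by
  rw [m4, Equiv.Perm.mul_apply, blk1_zero]
  show (Fin.cycleRange q.1).symm 0 = q.1
  exact Fin.cycleRange_symm_zero q.1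

private lemma m4_succ {p' : ℕ} (q : Fin (p' + 1) × Equiv.Perm (Fin p')) (j : Fin p') :
    m4 q j.succ = q.1.succAbove (q.2 j) := by
  rw [m4, Equiv.Perm.mul_apply, blk1_succ]
  show (Fin.cycleRange q.1).symm (q.2 j).succ = q.1.succAbove (q.2 j)
  exact Fin.cycleRange_symm_succ q.1 (q.2 j)

private lemma m4_bijective {p' : ℕ} : Function.Bijective (m4 (p' := p')) := by
  rw [Fintype.bijective_iff_injective_and_card]
  constructor
  · intro q q' h
    have h0 : q.1 = q'.1 := by
      have := congrArg (fun σ : Equiv.Perm (Fin (p' + 1)) => σ 0) h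
      simpa [m4_zero] using this
    have h1 : q.2 = q'.2 := by
      have hb : blk1 q.2 = blk1 q'.2 := by
        have := h
        rw [m4, m4, h0] at this
        exact mul_left_cancel this
      ext j
      have := congrArg (fun σ : Equiv.Perm (Fin (p' + 1)) => σ j.succ) hb
      simp only [blk1_succ] at this
      exact Fin.val_eq_of_eq (Fin.succ_injective _ this)
    exact Prod.ext h0 h1
  · simp [Fintype.card_perm, Nat.factorial_succ]

private lemma units_neg_one_pow_smul (i : ℕ) (x : ℝ) :
    ((-1 : ℤˣ) ^ i) • x = (-1 : ℝ) ^ i * x := by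
  rw [Units.smul_def, zsmul_eq_mul]
  rw [Units.val_pow_eq_pow_val]
  push_cast
  ring

lemma dLamAlt_apply (lam : Phase (d + 1) k → AlternatingMap ℝ (Phase (d + 1) k) ℝ (Fin p'))
    (hlam : ∀ v : Fin p' → Phase (d + 1) k, ContDiff ℝ (⊤ : ℕ∞) fun m => lam m v)
    (m : Phase (d + 1) k) (w : Fin (p' + 1) → Phase (d + 1) k) :
    dLamAlt lam hlam m w = dEval (fun m' u => lam m' u) m w := by
  classical
  have hterm : ∀ q : Fin (p' + 1) × Equiv.Perm (Fin p'),
      (Equiv.Perm.sign (m4 q)) • (Gml lam hlam m).domDomCongr (m4 q) w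
        = ((-1 : ℤˣ) ^ (q.1 : ℕ)) • (galt lam hlam m (w q.1) (w ∘ q.1.succAbove)) := by
    rintro ⟨i, ρ⟩
    have h1 : (Gml lam hlam m).domDomCongr (m4 (i, ρ)) w
        = galt lam hlam m (w i) ((w ∘ i.succAbove) ∘ ρ) := by
      rw [MultilinearMap.domDomCongr_apply, Gml_apply]
      rw [m4_zero (q := (i, ρ))]
      congr 1
      funext j
      rw [m4_succ (q := (i, ρ)) j]
      rfl
    have hsgn : Equiv.Perm.sign (m4 (i, ρ)) = (-1 : ℤˣ) ^ (i : ℕ) * Equiv.Perm.sign ρ := by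
      simp [m4, Fin.sign_cycleRange, sign_blk1]
    rw [h1, AlternatingMap.map_perm, hsgn, smul_smul, mul_assoc, Int.units_mul_self, mul_one]
  rw [dLamAlt, AlternatingMap.smul_apply, MultilinearMap.alternatization_apply]
  rw [← Function.Bijective.sum_comp m4_bijective
    (fun σ => Equiv.Perm.sign σ • (Gml lam hlam m).domDomCongr σ w)]
  simp only [hterm]
  rw [Fintype.sum_prod_type]
  simp only [Finset.sum_const, Finset.card_univ, Fintype.card_perm, Fintype.card_fin]
  rw [dEval]
  simp only [units_neg_one_pow_smul, nsmul_eq_mul]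
  rw [smul_eq_mul, ← Finset.mul_sum,
    inv_mul_cancel_left₀ (by exact_mod_cast Nat.factorial_ne_zero p' : ((p'.factorial : ℝ) ≠ 0))]
  rfl
section Core

variable {d k p' : ℕ}

private lemma cardA (A : XIdx d p') : A.1.card = d - p' := by
  have := A.2; omega

private lemma cardAc (hp : p' ≤ d) (A : XIdx d p') : A.1ᶜ.card = p' + 1 := by
  have h1 := A.2
  have h2 : A.1ᶜ.card = Fintype.card (Fin (d + 1)) - A.1.card := Finset.card_compl _
  rw [Fintype.card_fin] at h2
  omega

/-- The `i`-th element of the complement of `A`, in increasing order. -/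
private def csort (hp : p' ≤ d) (A : XIdx d p') (i : Fin (p' + 1)) : Fin (d + 1) :=
  ((A.1ᶜ.orderIsoOfFin (cardAc hp A)) i : Fin (d + 1))

private lemma xidx_mem (A : XIdx d p') (i : Fin (d - p')) : xidx A i ∈ A.1 :=
  ((A.1.orderIsoOfFin _) i).2

private lemma csort_mem (hp : p' ≤ d) (A : XIdx d p') (i : Fin (p' + 1)) :
    csort hp A i ∈ A.1ᶜ :=
  ((A.1ᶜ.orderIsoOfFin _) i).2

private lemma xidx_injective (A : XIdx d p') : Function.Injective (xidx A) :=
  fun _ _ h => (A.1.orderIsoOfFin _).injective (Subtype.coe_injective h)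

private lemma csort_injective (hp : p' ≤ d) (A : XIdx d p') :
    Function.Injective (csort hp A) :=
  fun _ _ h => (A.1ᶜ.orderIsoOfFin _).injective (Subtype.coe_injective h)

private lemma xidx_surj (A : XIdx d p') {x : Fin (d + 1)} (hx : x ∈ A.1) :
    ∃ i, xidx A i = x := by
  refine ⟨(A.1.orderIsoOfFin (by rw [A.2]; omega)).symm ⟨x, hx⟩, ?_⟩
  show (((A.1.orderIsoOfFin _) ((A.1.orderIsoOfFin _).symm ⟨x, hx⟩)) : Fin (d + 1)) = x
  rw [OrderIso.apply_symm_apply]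

private lemma csort_surj (hp : p' ≤ d) (A : XIdx d p') {x : Fin (d + 1)} (hx : x ∈ A.1ᶜ) :
    ∃ i, csort hp A i = x := by
  refine ⟨(A.1ᶜ.orderIsoOfFin (cardAc hp A)).symm ⟨x, hx⟩, ?_⟩
  show (((A.1ᶜ.orderIsoOfFin _) ((A.1ᶜ.orderIsoOfFin _).symm ⟨x, hx⟩)) : Fin (d + 1)) = x
  rw [OrderIso.apply_symm_apply]

private def io1 (hp : p' ≤ d) (i : Fin (d - p')) : Fin (d + 1) := ⟨i.1, by omega⟩

private def io2 (hp : p' ≤ d) (i : Fin (p' + 1)) : Fin (d + 1) :=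
  ⟨(d - p') + i.1, by omega⟩

private lemma io1_injective (hp : p' ≤ d) : Function.Injective (io1 hp) := by
  intro a b h
  apply Fin.ext
  simpa [io1, Fin.ext_iff] using h

private lemma io2_injective (hp : p' ≤ d) : Function.Injective (io2 hp) := by
  intro a b h
  apply Fin.ext
  simp only [io2, Fin.ext_iff] at h
  omega

private def tauFun (hp : p' ≤ d) (A : XIdx d p') (b : Fin (d + 1)) : Fin (d + 1) :=
  if h : b.1 < d - p' then xidx A ⟨b.1, h⟩
  else csort hp A ⟨b.1 - (d - p'), by have := b.isLt; omega⟩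

private lemma tauFun_injective (hp : p' ≤ d) (A : XIdx d p') :
    Function.Injective (tauFun hp A) := by
  intro a b h
  unfold tauFun at h
  split_ifs at h with h1 h2 h2
  · have := xidx_injective A h
    apply Fin.ext
    simpa [Fin.ext_iff] using this
  · have h3 := xidx_mem A ⟨a.1, h1⟩
    rw [h] at h3
    exact absurd h3 (Finset.mem_compl.1 (csort_mem hp A _))
  · have h3 := xidx_mem A ⟨b.1, h2⟩
    rw [← h] at h3
    exact absurd h3 (Finset.mem_compl.1 (csort_mem hp A _))
  · have := csort_injective hp A h
    have h4 := a.isLt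
    have h5 := b.isLt
    apply Fin.ext
    simp only [Fin.ext_iff] at this
    omega

private def tau (hp : p' ≤ d) (A : XIdx d p') : Equiv.Perm (Fin (d + 1)) :=
  Equiv.ofBijective _ (Finite.injective_iff_bijective.mp (tauFun_injective hp A))

private lemma tau_lo (hp : p' ≤ d) (A : XIdx d p') (i : Fin (d - p')) :
    tau hp A (io1 hp i) = xidx A i := by
  show tauFun hp A _ = _
  rw [tauFun, dif_pos (show (io1 hp i).1 < d - p' from i.isLt)]
  exact congrArg (xidx A) (Fin.ext rfl)

private lemma tau_hi (hp : p' ≤ d) (A : XIdx d p') (i : Fin (p' + 1)) :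
    tau hp A (io2 hp i) = csort hp A i := by
  show tauFun hp A _ = _
  rw [tauFun, dif_neg (show ¬ (io2 hp i).1 < d - p' by simp [io2])]
  exact congrArg (csort hp A) (Fin.ext (by simp [io2]))

private def E0 (hp : p' ≤ d) : (Fin (d - p') ⊕ Fin (p' + 1)) ≃ Fin (d + 1) :=
  finSumFinEquiv.trans (finCongr (by omega))

private lemma E0_inl (hp : p' ≤ d) (i : Fin (d - p')) : E0 hp (Sum.inl i) = io1 hp i := by
  apply Fin.ext
  simp [E0, io1]

private lemma E0_inr (hp : p' ≤ d) (i : Fin (p' + 1)) : E0 hp (Sum.inr i) = io2 hp i := by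
  apply Fin.ext
  simp [E0, io2]

private def blk (hp : p' ≤ d) (π : Equiv.Perm (Fin (d - p'))) (ρ : Equiv.Perm (Fin (p' + 1))) :
    Equiv.Perm (Fin (d + 1)) :=
  (E0 hp).permCongr (Equiv.sumCongr π ρ)

private lemma blk_lo (hp : p' ≤ d) (π : Equiv.Perm (Fin (d - p')))
    (ρ : Equiv.Perm (Fin (p' + 1))) (i : Fin (d - p')) :
    blk hp π ρ (io1 hp i) = io1 hp (π i) := by
  have h : (E0 hp).symm (io1 hp i) = Sum.inl i := by
    rw [Equiv.symm_apply_eq]; exact (E0_inl hp i).symm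
  simp [blk, Equiv.permCongr_apply, h, E0_inl]

private lemma blk_hi (hp : p' ≤ d) (π : Equiv.Perm (Fin (d - p')))
    (ρ : Equiv.Perm (Fin (p' + 1))) (i : Fin (p' + 1)) :
    blk hp π ρ (io2 hp i) = io2 hp (ρ i) := by
  have h : (E0 hp).symm (io2 hp i) = Sum.inr i := by
    rw [Equiv.symm_apply_eq]; exact (E0_inr hp i).symm
  simp [blk, Equiv.permCongr_apply, h, E0_inr]

private lemma sign_blk (hp : p' ≤ d) (π : Equiv.Perm (Fin (d - p')))
    (ρ : Equiv.Perm (Fin (p' + 1))) :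
    Equiv.Perm.sign (blk hp π ρ) = Equiv.Perm.sign π * Equiv.Perm.sign ρ := by
  simp [blk, Equiv.Perm.sign_permCongr, Equiv.Perm.sign_sumCongr]

private lemma blk_injective (hp : p' ≤ d) :
    Function.Injective (fun q : Equiv.Perm (Fin (d - p')) × Equiv.Perm (Fin (p' + 1)) =>
      blk hp q.1 q.2) := by
  intro q q' h
  simp only at h
  have h1 : q.1 = q'.1 := by
    ext i
    have := congrArg (fun σ : Equiv.Perm (Fin (d + 1)) => σ (io1 hp i)) h
    simp only [blk_lo] at this
    exact Fin.val_eq_of_eq (io1_injective hp this)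
  have h2 : q.2 = q'.2 := by
    ext i
    have := congrArg (fun σ : Equiv.Perm (Fin (d + 1)) => σ (io2 hp i)) h
    simp only [blk_hi] at this
    exact Fin.val_eq_of_eq (io2_injective hp this)
  exact Prod.ext h1 h2

/-- Every index is `io1` or `io2`. -/
private lemma io_cases (hp : p' ≤ d) (b : Fin (d + 1)) :
    (∃ i, b = io1 hp i) ∨ (∃ i, b = io2 hp i) := by
  by_cases hb : b.1 < d - p'
  · exact Or.inl ⟨⟨b.1, hb⟩, Fin.ext rfl⟩
  · refine Or.inr ⟨⟨b.1 - (d - p'), by have := b.isLt; omega⟩, Fin.ext ?_⟩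
    simp [io2]
    omega

end Core
section S1

variable {d k p' : ℕ}

private lemma sign_sq (σ : Equiv.Perm (Fin (d + 1))) :
    ((Equiv.Perm.sign σ : ℤ) : ℝ) * ((Equiv.Perm.sign σ : ℤ) : ℝ) = 1 := by
  rcases Int.units_eq_one_or (Equiv.Perm.sign σ) with h | h <;> rw [h] <;> norm_num

private lemma sign_sq' {N : ℕ} (σ : Equiv.Perm (Fin N)) :
    ((Equiv.Perm.sign σ : ℤ) : ℝ) * ((Equiv.Perm.sign σ : ℤ) : ℝ) = 1 := by
  rcases Int.units_eq_one_or (Equiv.Perm.sign σ) with h | h <;> rw [h] <;> norm_num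

/-- Given `σ` whose `io1`-part maps into `A`, decompose `σ = tau hp A * blk hp π ρ`. -/
private lemma decompose_sigma (hp : p' ≤ d) (A : XIdx d p') (σ : Equiv.Perm (Fin (d + 1)))
    (hall : ∀ c : Fin (d - p'), σ (io1 hp c) ∈ A.1) :
    ∃ π ρ, σ = tau hp A * blk hp π ρ := by
  classical
  -- build π
  have hπinj : Function.Injective (fun c : Fin (d - p') =>
      (A.1.orderIsoOfFin (cardA A)).symm ⟨σ (io1 hp c), hall c⟩) := by
    intro a b h
    have := congrArg (fun z => ((A.1.orderIsoOfFin (cardA A)) z : Fin (d + 1))) h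
    simp only [OrderIso.apply_symm_apply] at this
    exact io1_injective hp (σ.injective this)
  set π : Equiv.Perm (Fin (d - p')) :=
    Equiv.ofBijective (fun c : Fin (d - p') =>
      (A.1.orderIsoOfFin (cardA A)).symm ⟨σ (io1 hp c), hall c⟩)
      (Finite.injective_iff_bijective.mp hπinj) with hπ
  have hπval : ∀ c, xidx A (π c) = σ (io1 hp c) := by
    intro c
    show ((A.1.orderIsoOfFin (cardA A)) ((A.1.orderIsoOfFin (cardA A)).symm ⟨σ (io1 hp c), hall c⟩) :
      Fin (d + 1)) = σ (io1 hp c)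
    rw [OrderIso.apply_symm_apply]
  -- σ io2 lands in the complement
  have hc2 : ∀ i : Fin (p' + 1), σ (io2 hp i) ∈ A.1ᶜ := by
    intro i
    rw [Finset.mem_compl]
    intro hmem
    obtain ⟨c, hc⟩ := xidx_surj A hmem
    obtain ⟨c', hc'⟩ := π.surjective c
    rw [← hc', hπval c'] at hc
    have := σ.injective hc
    have h1 : (io1 hp c').1 = (io2 hp i).1 := by rw [this]
    simp only [io1, io2] at h1
    have := c'.isLt
    omega
  have hρinj : Function.Injective (fun i : Fin (p' + 1) =>
      (A.1ᶜ.orderIsoOfFin (cardAc hp A)).symm ⟨σ (io2 hp i), hc2 i⟩) := by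
    intro a b h
    have := congrArg (fun z => ((A.1ᶜ.orderIsoOfFin (cardAc hp A)) z : Fin (d + 1))) h
    simp only [OrderIso.apply_symm_apply] at this
    exact io2_injective hp (σ.injective this)
  set ρ : Equiv.Perm (Fin (p' + 1)) :=
    Equiv.ofBijective (fun i : Fin (p' + 1) =>
      (A.1ᶜ.orderIsoOfFin (cardAc hp A)).symm ⟨σ (io2 hp i), hc2 i⟩)
      (Finite.injective_iff_bijective.mp hρinj) with hρ
  have hρval : ∀ i, csort hp A (ρ i) = σ (io2 hp i) := by
    intro i
    show ((A.1ᶜ.orderIsoOfFin (cardAc hp A)) ((A.1ᶜ.orderIsoOfFin (cardAc hp A)).symm ⟨σ (io2 hp i), hc2 i⟩) :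
      Fin (d + 1)) = σ (io2 hp i)
    rw [OrderIso.apply_symm_apply]
  refine ⟨π, ρ, ?_⟩
  ext b
  rcases io_cases hp b with ⟨i, rfl⟩ | ⟨i, rfl⟩
  · rw [Equiv.Perm.mul_apply, blk_lo, tau_lo, hπval]
  · rw [Equiv.Perm.mul_apply, blk_hi, tau_hi, hρval]

private lemma tau_blk_injective (hp : p' ≤ d) (A : XIdx d p') :
    Function.Injective (fun q : Equiv.Perm (Fin (d - p')) × Equiv.Perm (Fin (p' + 1)) =>
      tau hp A * blk hp q.1 q.2) := by
  intro q q' h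
  simp only at h
  exact blk_injective hp (mul_left_cancel h)

private lemma S1 (hp : p' ≤ d) (A : XIdx d p')
    (Φ : AlternatingMap ℝ (Phase (d + 1) k) ℝ (Fin (p' + 1)))
    (T : Fin (d + 1) → Phase (d + 1) k)
    (hT : ∀ α β : Fin (d + 1), (T β).1 (Fin.castAdd k α) = if α = β then 1 else 0) :
    ∑ σ : Equiv.Perm (Fin (d + 1)), ((Equiv.Perm.sign σ : ℤ) : ℝ)
        * dxA d k p' A (fun i : Fin (d - p') => T (σ (io1 hp i)))
        * Φ (fun i : Fin (p' + 1) => T (σ (io2 hp i)))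
      = (((d - p').factorial : ℝ) * ((p' + 1).factorial : ℝ))
          * (((Equiv.Perm.sign (tau hp A) : ℤ) : ℝ) * Φ (T ∘ csort hp A)) := by
  classical
  set F : Equiv.Perm (Fin (d + 1)) → ℝ := fun σ => ((Equiv.Perm.sign σ : ℤ) : ℝ)
      * dxA d k p' A (fun i : Fin (d - p') => T (σ (io1 hp i)))
      * Φ (fun i : Fin (p' + 1) => T (σ (io2 hp i))) with hF
  have hvanish : ∀ σ ∈ (Finset.univ : Finset (Equiv.Perm (Fin (d + 1)))),
      σ ∉ Finset.image (fun q : Equiv.Perm (Fin (d - p')) × Equiv.Perm (Fin (p' + 1)) =>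
        tau hp A * blk hp q.1 q.2) Finset.univ → F σ = 0 := by
    intro σ _ hσ
    by_cases hall : ∀ c : Fin (d - p'), σ (io1 hp c) ∈ A.1
    · exfalso
      obtain ⟨π, ρ, hd⟩ := decompose_sigma hp A σ hall
      exact hσ (Finset.mem_image.2 ⟨⟨π, ρ⟩, Finset.mem_univ _, hd.symm⟩)
    · push_neg at hall
      obtain ⟨c, hc⟩ := hall
      have hdx : dxA d k p' A (fun i : Fin (d - p') => T (σ (io1 hp i))) = 0 := by
        apply Matrix.det_eq_zero_of_column_eq_zero c
        intro r
        show (T (σ (io1 hp c))).1 (Fin.castAdd k (xidx A r)) = 0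
        rw [hT]
        rw [if_neg]
        intro h
        exact hc (h ▸ xidx_mem A r)
      rw [hF]
      simp only [hdx, mul_zero, zero_mul]
  rw [← Finset.sum_subset (Finset.subset_univ _) hvanish]
  rw [Finset.sum_image (fun q _ q' _ h => tau_blk_injective hp A h)]
  have hterm : ∀ q : Equiv.Perm (Fin (d - p')) × Equiv.Perm (Fin (p' + 1)),
      F (tau hp A * blk hp q.1 q.2)
        = ((Equiv.Perm.sign (tau hp A) : ℤ) : ℝ) * Φ (T ∘ csort hp A) := by
    rintro ⟨π, ρ⟩
    have happ1 : ∀ i : Fin (d - p'), (tau hp A * blk hp π ρ) (io1 hp i) = xidx A (π i) := by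
      intro i; rw [Equiv.Perm.mul_apply, blk_lo, tau_lo]
    have happ2 : ∀ i : Fin (p' + 1),
        (tau hp A * blk hp π ρ) (io2 hp i) = csort hp A (ρ i) := by
      intro i; rw [Equiv.Perm.mul_apply, blk_hi, tau_hi]
    have hdx : dxA d k p' A (fun i : Fin (d - p') => T ((tau hp A * blk hp π ρ) (io1 hp i)))
        = ((Equiv.Perm.sign π : ℤ) : ℝ) := by
      rw [dxA]
      have hmat : (Matrix.of fun r c : Fin (d - p') =>
            (T ((tau hp A * blk hp π ρ) (io1 hp c))).1 (Fin.castAdd k (xidx A r)))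
          = (1 : Matrix (Fin (d - p')) (Fin (d - p')) ℝ).submatrix (⇑(π⁻¹)) id := by
        ext r c
        rw [Matrix.of_apply, happ1, hT, Matrix.submatrix_apply, Matrix.one_apply, id]
        congr 1
        apply propext
        constructor
        · intro h
          have := xidx_injective A h
          rw [this]
          simp
        · intro h
          rw [show r = π c by simpa [Equiv.Perm.inv_def, Equiv.symm_apply_eq] using h]
      rw [hmat, Matrix.det_permute, Matrix.det_one, mul_one]
      simp
    have hΦ : Φ (fun i : Fin (p' + 1) => T ((tau hp A * blk hp π ρ) (io2 hp i)))
        = Equiv.Perm.sign ρ • Φ (T ∘ csort hp A) := by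
      have : (fun i : Fin (p' + 1) => T ((tau hp A * blk hp π ρ) (io2 hp i)))
          = (T ∘ csort hp A) ∘ ρ := by
        funext i
        rw [happ2]
        rfl
      rw [this, AlternatingMap.map_perm]
    have hsgn : ((Equiv.Perm.sign (tau hp A * blk hp π ρ) : ℤ) : ℝ)
        = ((Equiv.Perm.sign (tau hp A) : ℤ) : ℝ) * ((Equiv.Perm.sign π : ℤ) : ℝ)
          * ((Equiv.Perm.sign ρ : ℤ) : ℝ) := by
      rw [map_mul, sign_blk]
      push_cast
      ring
    rw [hF]
    simp only [hdx, hΦ, hsgn]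
    rw [Units.smul_def, zsmul_eq_mul]
    have h1 := sign_sq' (N := d - p') π
    have h2 := sign_sq' (N := p' + 1) ρ
    set a := ((Equiv.Perm.sign (tau hp A) : ℤ) : ℝ)
    set b := ((Equiv.Perm.sign π : ℤ) : ℝ)
    set c := ((Equiv.Perm.sign ρ : ℤ) : ℝ)
    set X := (Φ (T ∘ csort hp A) : ℝ)
    push_cast
    linear_combination (a * c * c * X) * h1 + (a * X) * h2
  simp only [hterm]
  rw [Finset.sum_const, Finset.card_univ, Fintype.card_prod, Fintype.card_perm,
    Fintype.card_perm, Fintype.card_fin, nsmul_eq_mul]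
  simp only [Fintype.card_fin]
  push_cast
  ring

end S1
section S2

variable {d k p' : ℕ}

private lemma tb_lo (hp : p' ≤ d) (A : XIdx d p') (π : Equiv.Perm (Fin (d - p')))
    (ρ : Equiv.Perm (Fin (p' + 1))) (i : Fin (d - p')) :
    (tau hp A * blk hp π ρ) (io1 hp i) = xidx A (π i) := by
  rw [Equiv.Perm.mul_apply, blk_lo, tau_lo]

private lemma tb_hi (hp : p' ≤ d) (A : XIdx d p') (π : Equiv.Perm (Fin (d - p')))
    (ρ : Equiv.Perm (Fin (p' + 1))) (i : Fin (p' + 1)) :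
    (tau hp A * blk hp π ρ) (io2 hp i) = csort hp A (ρ i) := by
  rw [Equiv.Perm.mul_apply, blk_hi, tau_hi]

private lemma S2 (hp : p' ≤ d) (A : XIdx d p')
    (w : Fin (p' + 1) → Phase (d + 1) k) (v : Fin (p' + 1) → Fin (d + 1) → ℝ)
    (hw : ∀ j a, (w j).1 (Fin.castAdd k a) = v j a) :
    omA d k p' hp A w = ((Equiv.Perm.sign (tau hp A) : ℤ) : ℝ)
      * Matrix.det (Matrix.of fun i j : Fin (p' + 1) => v j (csort hp A i)) := by
  classical
  rw [omA, volEval]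
  set W : Fin (d + 1) → Phase (d + 1) k := fun b : Fin (d + 1) =>
    if hb : b.1 < d - p' then (Pi.single (Fin.castAdd k (xidx A ⟨b.1, hb⟩)) 1, 0)
    else w ⟨b.1 - (d - p'), by have := b.isLt; omega⟩ with hW
  set M : Matrix (Fin (d + 1)) (Fin (d + 1)) ℝ :=
    Matrix.of fun a b : Fin (d + 1) => (W b).1 (Fin.castAdd k a) with hM
  have hM1 : ∀ (a : Fin (d + 1)) (c : Fin (d - p')),
      M a (io1 hp c) = if a = xidx A c then 1 else 0 := by
    intro a c
    have hdif : (io1 hp c).1 < d - p' := c.isLt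
    show (W (io1 hp c)).1 (Fin.castAdd k a) = _
    rw [hW]
    simp only [hdif, dif_pos]
    rw [show (⟨(io1 hp c).1, hdif⟩ : Fin (d - p')) = c from Fin.ext rfl]
    rw [Pi.single_apply]
    congr 1
    apply propext
    constructor
    · intro h
      have : (Fin.castAdd k a).1 = (Fin.castAdd k (xidx A c)).1 := by rw [h]
      exact Fin.ext this
    · intro h
      rw [h]
  have hM2 : ∀ (a : Fin (d + 1)) (i : Fin (p' + 1)), M a (io2 hp i) = v i a := by
    intro a i
    have hdif : ¬ (io2 hp i).1 < d - p' := by simp [io2]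
    show (W (io2 hp i)).1 (Fin.castAdd k a) = _
    rw [hW]
    simp only [hdif, dif_neg, not_false_iff]
    rw [show (⟨(io2 hp i).1 - (d - p'), by have := (io2 hp i).isLt; omega⟩ : Fin (p' + 1)) = i
      from Fin.ext (by simp [io2])]
    exact hw i a
  rw [Matrix.det_apply']
  have hvanish : ∀ σ ∈ (Finset.univ : Finset (Equiv.Perm (Fin (d + 1)))),
      σ ∉ Finset.image (fun ρ : Equiv.Perm (Fin (p' + 1)) =>
        tau hp A * blk hp 1 ρ) Finset.univ →
      Equiv.Perm.sign σ * ∏ i, M (σ i) i = 0 := by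
    intro σ _ hσ
    by_cases hall : ∀ c : Fin (d - p'), σ (io1 hp c) = xidx A c
    · exfalso
      have hall' : ∀ c : Fin (d - p'), σ (io1 hp c) ∈ A.1 := fun c => hall c ▸ xidx_mem A c
      obtain ⟨π, ρ, hd⟩ := decompose_sigma hp A σ hall'
      have hπ1 : π = 1 := by
        ext c
        have h1 : σ (io1 hp c) = xidx A (π c) := by rw [hd]; exact tb_lo hp A π ρ c
        have := xidx_injective A (h1.symm.trans (hall c))
        rw [this]
        rfl
      apply hσ
      refine Finset.mem_image.2 ⟨ρ, Finset.mem_univ _, ?_⟩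
      rw [← hπ1, ← hd]
    · push_neg at hall
      obtain ⟨c, hc⟩ := hall
      have : M (σ (io1 hp c)) (io1 hp c) = 0 := by rw [hM1, if_neg hc]
      have hz : (∏ i : Fin (d + 1), M (σ i) i) = 0 :=
        Finset.prod_eq_zero (Finset.mem_univ (io1 hp c)) this
      rw [hz]
      simp
  rw [← Finset.sum_subset (Finset.subset_univ _) hvanish]
  have hinj : ∀ ρ ∈ (Finset.univ : Finset (Equiv.Perm (Fin (p' + 1)))),
      ∀ ρ' ∈ Finset.univ, tau hp A * blk hp 1 ρ = tau hp A * blk hp 1 ρ' → ρ = ρ' := by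
    intro ρ _ ρ' _ h
    have := blk_injective hp (show (fun q : _ × _ => blk hp q.1 q.2) (1, ρ)
      = (fun q : _ × _ => blk hp q.1 q.2) (1, ρ') from mul_left_cancel h)
    exact (Prod.ext_iff.1 this).2
  rw [Finset.sum_image hinj]
  have hterm : ∀ ρ : Equiv.Perm (Fin (p' + 1)),
      (Equiv.Perm.sign (tau hp A * blk hp 1 ρ) : ℝ) * ∏ i, M ((tau hp A * blk hp 1 ρ) i) i
        = ((Equiv.Perm.sign (tau hp A) : ℤ) : ℝ) * (((Equiv.Perm.sign ρ : ℤ) : ℝ)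
            * ∏ i, v i (csort hp A (ρ i))) := by
    intro ρ
    have hprod : ∏ i, M ((tau hp A * blk hp 1 ρ) i) i = ∏ i, v i (csort hp A (ρ i)) := by
      rw [← Equiv.prod_comp (E0 hp) (fun b => M ((tau hp A * blk hp 1 ρ) b) b)]
      rw [Fintype.prod_sum_type]
      have h1 : ∀ c : Fin (d - p'),
          M ((tau hp A * blk hp 1 ρ) (E0 hp (Sum.inl c))) (E0 hp (Sum.inl c)) = 1 := by
        intro c
        rw [E0_inl, hM1, tb_lo]
        simp
      have h2 : ∀ i : Fin (p' + 1),
          M ((tau hp A * blk hp 1 ρ) (E0 hp (Sum.inr i))) (E0 hp (Sum.inr i))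
            = v i (csort hp A (ρ i)) := by
        intro i
        rw [E0_inr, hM2, tb_hi]
      simp only [h1, h2, Finset.prod_const_one, one_mul]
    rw [hprod]
    have hsgn : ((Equiv.Perm.sign (tau hp A * blk hp 1 ρ) : ℤ) : ℝ)
        = ((Equiv.Perm.sign (tau hp A) : ℤ) : ℝ) * ((Equiv.Perm.sign ρ : ℤ) : ℝ) := by
      rw [map_mul, sign_blk]
      simp only [map_one, one_mul]
      push_cast
      ring
    rw [show ((Equiv.Perm.sign (tau hp A * blk hp 1 ρ)) : ℝ)
      = ((Equiv.Perm.sign (tau hp A * blk hp 1 ρ) : ℤ) : ℝ) from by norm_cast]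
    rw [hsgn]
    ring
  simp only [hterm]
  rw [← Finset.mul_sum, Matrix.det_apply']
  congr 1

end S2
section Expand

variable {d k p' : ℕ}

private lemma midx_mem {N n : ℕ} (B : MultiIdx N n) (i : Fin n) : midx B i ∈ B.1 :=
  ((B.1.orderIsoOfFin B.2) i).2

private lemma midx_injective {N n : ℕ} (B : MultiIdx N n) : Function.Injective (midx B) :=
  fun _ _ h => (B.1.orderIsoOfFin B.2).injective (Subtype.coe_injective h)

private lemma midx_image {N n : ℕ} (B : MultiIdx N n) (ρ : Equiv.Perm (Fin n)) :
    Finset.image (fun i => midx B (ρ i)) Finset.univ = B.1 := by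
  apply Finset.eq_of_subset_of_card_le
  · intro x hx
    obtain ⟨i, _, rfl⟩ := Finset.mem_image.1 hx
    exact midx_mem B (ρ i)
  · have hcard : (Finset.image (fun i => midx B (ρ i)) Finset.univ).card = n := by
      rw [show (fun i => midx B (ρ i)) = midx B ∘ ρ from rfl,
        Finset.card_image_of_injective _ ((midx_injective B).comp ρ.injective),
        Finset.card_univ, Fintype.card_fin]
    rw [hcard, B.2]

private lemma expand (hp : p' ≤ d)
    (Φ : AlternatingMap ℝ (Phase (d + 1) k) ℝ (Fin (p' + 1)))
    (T : Fin (d + 1) → Phase (d + 1) k) (v : Fin (p' + 1) → Fin (d + 1) → ℝ) :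
    Φ (fun j => ∑ α : Fin (d + 1), v j α • T α)
      = ∑ B : MultiIdx (d + 1) (p' + 1),
          Matrix.det (Matrix.of fun i j : Fin (p' + 1) => v j (midx B i)) * Φ (T ∘ midx B) := by
  classical
  have h1 : Φ (fun j => ∑ α : Fin (d + 1), v j α • T α)
      = ∑ f : Fin (p' + 1) → Fin (d + 1), (∏ j, v j (f j)) • Φ (T ∘ f) := by
    rw [show (Φ (fun j => ∑ α : Fin (d + 1), v j α • T α) : ℝ)
      = Φ.toMultilinearMap (fun j => ∑ α : Fin (d + 1), v j α • T α) from rfl]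
    rw [MultilinearMap.map_sum]
    apply Finset.sum_congr rfl
    intro f _
    rw [MultilinearMap.map_smul_univ]
    rfl
  rw [h1]
  have hvanish : ∀ f ∈ (Finset.univ : Finset (Fin (p' + 1) → Fin (d + 1))),
      f ∉ Finset.image (fun q : MultiIdx (d + 1) (p' + 1) × Equiv.Perm (Fin (p' + 1)) =>
        midx q.1 ∘ q.2) Finset.univ →
      (∏ j, v j (f j)) • Φ (T ∘ f) = 0 := by
    intro f _ hf
    by_cases hinj : Function.Injective f
    · exfalso
      apply hf
      have hcard : (Finset.image f Finset.univ).card = p' + 1 := by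
        rw [Finset.card_image_of_injective _ hinj, Finset.card_univ, Fintype.card_fin]
      set B : MultiIdx (d + 1) (p' + 1) := ⟨Finset.image f Finset.univ, hcard⟩ with hB
      have hmem : ∀ i, f i ∈ B.1 := fun i => Finset.mem_image_of_mem f (Finset.mem_univ i)
      have hρinj : Function.Injective (fun i : Fin (p' + 1) =>
          (B.1.orderIsoOfFin B.2).symm ⟨f i, hmem i⟩) := by
        intro a b h
        have := congrArg (fun z => ((B.1.orderIsoOfFin B.2) z : Fin (d + 1))) h
        simp only [OrderIso.apply_symm_apply] at this
        exact hinj this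
      set ρ : Equiv.Perm (Fin (p' + 1)) :=
        Equiv.ofBijective _ (Finite.injective_iff_bijective.mp hρinj) with hρ
      refine Finset.mem_image.2 ⟨⟨B, ρ⟩, Finset.mem_univ _, ?_⟩
      funext i
      show midx B (ρ i) = f i
      show ((B.1.orderIsoOfFin B.2) ((B.1.orderIsoOfFin B.2).symm ⟨f i, hmem i⟩) :
        Fin (d + 1)) = f i
      rw [OrderIso.apply_symm_apply]
    · rw [Function.not_injective_iff] at hinj
      obtain ⟨a, b, hab, hne⟩ := hinj
      rw [AlternatingMap.map_eq_zero_of_eq Φ (T ∘ f)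
        (show (T ∘ f) a = (T ∘ f) b from congrArg T hab) hne]
      simp
  rw [← Finset.sum_subset (Finset.subset_univ _) hvanish]
  have hinj2 : ∀ q ∈ (Finset.univ : Finset (MultiIdx (d + 1) (p' + 1)
        × Equiv.Perm (Fin (p' + 1)))),
      ∀ q' ∈ Finset.univ, midx q.1 ∘ q.2 = midx q'.1 ∘ q'.2 → q = q' := by
    intro q _ q' _ h
    have hB : q.1 = q'.1 := by
      apply Subtype.ext
      rw [← midx_image q.1 q.2, ← midx_image q'.1 q'.2]
      exact congrArg (fun g => Finset.image g Finset.univ) (funext fun i => congrFun h i)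
    have hρ : q.2 = q'.2 := by
      ext i
      apply Fin.val_eq_of_eq
      apply midx_injective q.1
      have := congrFun h i
      rw [hB]
      rw [hB] at this
      exact this
    exact Prod.ext hB hρ
  rw [Finset.sum_image hinj2]
  rw [Fintype.sum_prod_type]
  apply Finset.sum_congr rfl
  intro B _
  have hterm : ∀ ρ : Equiv.Perm (Fin (p' + 1)),
      (∏ j, v j ((midx B ∘ ρ) j)) • Φ (T ∘ (midx B ∘ ρ))
        = (((Equiv.Perm.sign ρ : ℤ) : ℝ) * ∏ j, v j (midx B (ρ j))) * Φ (T ∘ midx B) := by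
    intro ρ
    have : T ∘ (midx B ∘ ρ) = (T ∘ midx B) ∘ ρ := rfl
    rw [this, AlternatingMap.map_perm, Units.smul_def, zsmul_eq_mul, smul_eq_mul]
    simp only [Function.comp_apply]
    push_cast
    ring
  simp only [hterm]
  rw [← Finset.sum_mul, Matrix.det_apply']
  congr 1

end Expand
section Assemble

variable {d k p' : ℕ}

/-- The complement bijection between `XIdx` and `MultiIdx`. -/
private def ce (hp : p' ≤ d) : XIdx d p' ≃ MultiIdx (d + 1) (p' + 1) where
  toFun A := ⟨A.1ᶜ, cardAc hp A⟩
  invFun B := ⟨B.1ᶜ, by rw [Finset.card_compl, Fintype.card_fin, B.2]⟩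
  left_inv A := Subtype.ext (compl_compl _)
  right_inv B := Subtype.ext (compl_compl _)

private lemma csort_eq_midx (hp : p' ≤ d) (A : XIdx d p') :
    csort hp A = midx (ce hp A) := rfl

private lemma sharp_one (hp : p' ≤ d)
    (lam : Phase (d + 1) k → AlternatingMap ℝ (Phase (d + 1) k) ℝ (Fin p'))
    (hlam : ∀ v : Fin p' → Phase (d + 1) k, ContDiff ℝ (⊤ : ℕ∞) fun m => lam m v)
    (m : Phase (d + 1) k)
    (T : Fin (d + 1) → Phase (d + 1) k)
    (hT : ∀ α β : Fin (d + 1), (T β).1 (Fin.castAdd k α) = if α = β then 1 else 0)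
    (w : Fin (p' + 1) → Phase (d + 1) k) (v : Fin (p' + 1) → Fin (d + 1) → ℝ)
    (hw : ∀ j, w j = ∑ α : Fin (d + 1), v j α • T α) :
    sharpGen d k p' 1 hp (fun _ _ => T) lam m w = dLamAlt lam hlam m w := by
  classical
  have hwc : ∀ (j : Fin (p' + 1)) (a : Fin (d + 1)), (w j).1 (Fin.castAdd k a) = v j a := by
    intro j a
    rw [hw j]
    have h1 : (∑ α : Fin (d + 1), v j α • T α).1 = ∑ α : Fin (d + 1), (v j α • T α).1 :=
      Prod.fst_sum
    rw [h1]
    rw [Finset.sum_apply]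
    have h2 : ∀ α, (v j α • T α).1 (Fin.castAdd k a) = v j α * (T α).1 (Fin.castAdd k a) :=
      fun α => rfl
    simp only [h2, hT, mul_ite, mul_one, mul_zero]
    simp
  rw [sharpGen]
  simp only [Fin.sum_univ_one]
  have hwedge : ∀ A : XIdx d p', wedgeDxDlam d k p' hp A lam m T
      = ((Equiv.Perm.sign (tau hp A) : ℤ) : ℝ) * dLamAlt lam hlam m (T ∘ csort hp A) := by
    intro A
    rw [show wedgeDxDlam d k p' hp A lam m T
      = (((d - p').factorial : ℝ) * ((p' + 1).factorial : ℝ))⁻¹ *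
        ∑ σ : Equiv.Perm (Fin (d + 1)), ((Equiv.Perm.sign σ : ℤ) : ℝ)
          * dxA d k p' A (fun i : Fin (d - p') => T (σ (io1 hp i)))
          * dEval (fun m' u => lam m' u) m (fun i : Fin (p' + 1) => T (σ (io2 hp i)))
        from rfl]
    simp only [← dLamAlt_apply lam hlam m]
    rw [S1 hp A (dLamAlt lam hlam m) T hT]
    rw [inv_mul_cancel_left₀ (by positivity)]
  simp only [hwedge, S2 hp _ w v hwc]
  have hAterm : ∀ A : XIdx d p',
      ((Equiv.Perm.sign (tau hp A) : ℤ) : ℝ) * dLamAlt lam hlam m (T ∘ csort hp A)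
        * (((Equiv.Perm.sign (tau hp A) : ℤ) : ℝ)
            * Matrix.det (Matrix.of fun i j : Fin (p' + 1) => v j (csort hp A i)))
      = Matrix.det (Matrix.of fun i j : Fin (p' + 1) => v j (midx (ce hp A) i))
          * dLamAlt lam hlam m (T ∘ midx (ce hp A)) := by
    intro A
    rw [← csort_eq_midx]
    have hsq := sign_sq' (N := d + 1) (tau hp A)
    set s := ((Equiv.Perm.sign (tau hp A) : ℤ) : ℝ)
    set D := Matrix.det (Matrix.of fun i j : Fin (p' + 1) => v j (csort hp A i))
    set P := (dLamAlt lam hlam m (T ∘ csort hp A) : ℝ)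
    linear_combination (D * P) * hsq
  simp only [hAterm]
  rw [Equiv.sum_comp (ce hp) (fun B => Matrix.det
    (Matrix.of fun i j : Fin (p' + 1) => v j (midx B i)) * dLamAlt lam hlam m (T ∘ midx B))]
  rw [show w = fun j => ∑ α : Fin (d + 1), v j α • T α from funext hw]
  exact (expand hp (dLamAlt lam hlam m) T v).symm

end Assemble
/-- Let `λ` be an admissible `(p−1)`-form (`1 ≤ p ≤ n`; here `p = p'+1`,
`n = d+1`), and let `Γ` be the graph of a smooth solution `x ↦ (q(x),p(x))` of the
generalized Hamilton equations `(−1)ⁿ (∂(q,p)/∂(x¹,…,xⁿ)) ⨼ Ω = dH mod ℐ`.  Then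
`dλ|_Γ = {Hω, λ}_ω|_Γ`, the ω-bracket `{Hω, λ}_ω` being `X ♯ λ` for any `H`-Hamiltonian
`n`-vector field `X`. -/
theorem stmt14 (d k p' : ℕ) (hp : p' ≤ d)
    (lam : Phase (d + 1) k → AlternatingMap ℝ (Phase (d + 1) k) ℝ (Fin p'))
    (hlam : ∀ v : Fin p' → Phase (d + 1) k, ContDiff ℝ (⊤ : ℕ∞) fun m => lam m v)
    (hadm : Admissible d k p' hp lam)
    (H : Phase (d + 1) k → ℝ) (hH : ContDiff ℝ (⊤ : ℕ∞) H)
    -- the solution x ↦ (q(x), p(x)), with graph Γ parametrized by U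
    (u : (Fin (d + 1) → ℝ) → (Fin k → ℝ)) (hu : ContDiff ℝ (⊤ : ℕ∞) u)
    (p : (Fin (d + 1) → ℝ) → (MultiIdx (d + 1 + k) (d + 1) → ℝ)) (hpsm : ContDiff ℝ (⊤ : ℕ∞) p)
    (U : (Fin (d + 1) → ℝ) → Phase (d + 1) k)
    (hU : ∀ x, U x = (Fin.append x (u x), p x))
    (hHam : ∀ x : Fin (d + 1) → ℝ, ∃ c : Fin (d + 1) → ℝ, ∀ V : Phase (d + 1) k,
      (-1 : ℝ) ^ (d + 1) *
          OmegaEval (d + 1) k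
            (Fin.snoc (fun α : Fin (d + 1) => fderiv ℝ U x (Pi.single α 1)) V)
        = fderiv ℝ H (U x) V + ∑ β : Fin (d + 1), c β * V.1 (Fin.castAdd k β)) :
    -- dλ|_Γ = {Hω, λ}_ω|_Γ
    ∀ (r : ℕ) (X : NVecField d k r), IsHamiltonian d k r H X →
      ∀ (x : Fin (d + 1) → ℝ) (v : Fin (p' + 1) → (Fin (d + 1) → ℝ)),
        dEval (fun m' w => lam m' w) (U x) (fun j => fderiv ℝ U x (v j))
          = sharpGen d k p' r hp X lam (U x) (fun j => fderiv ℝ U x (v j)) := by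
  intro r X hX x v
  classical
  -- smoothness of U
  have hUc : ContDiff ℝ (⊤ : ℕ∞) U := by
    have hrw : U = fun y => (Fin.append y (u y), p y) := funext hU
    rw [hrw]
    refine ContDiff.prodMk ?_ hpsm
    rw [contDiff_pi]
    intro i
    refine Fin.addCases (motive := fun i => ContDiff ℝ (⊤ : ℕ∞) fun y => Fin.append y (u y) i) ?_ ?_ i
    · intro β
      simp only [Fin.append_left]
      exact (ContinuousLinearMap.proj (R := ℝ) (φ := fun _ : Fin (d + 1) => ℝ) β).contDiff
    · intro j
      simp only [Fin.append_right]
      exact contDiff_pi.1 hu j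
  have hUd : DifferentiableAt ℝ U x := (hUc.differentiable (by simp)).differentiableAt
  set T : Fin (d + 1) → Phase (d + 1) k := fun α => fderiv ℝ U x (Pi.single α 1) with hTdef
  have hT : ∀ α β : Fin (d + 1), (T β).1 (Fin.castAdd k α) = if α = β then 1 else 0 := by
    intro α β
    set L : Phase (d + 1) k →L[ℝ] ℝ :=
      (ContinuousLinearMap.proj (Fin.castAdd k α)).comp
        (ContinuousLinearMap.fst ℝ ((Fin (d + 1 + k)) → ℝ) (MultiIdx (d + 1 + k) (d + 1) → ℝ))
      with hL
    have h1 : (fun y => L (U y)) = fun y : Fin (d + 1) → ℝ => y α := by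
      funext y
      show (U y).1 (Fin.castAdd k α) = y α
      rw [hU y]
      exact Fin.append_left _ _ _
    have h2 : HasFDerivAt (fun y => L (U y)) (L.comp (fderiv ℝ U x)) x :=
      L.hasFDerivAt.comp x hUd.hasFDerivAt
    rw [h1] at h2
    set P : ((Fin (d + 1) → ℝ) →L[ℝ] ℝ) :=
      ContinuousLinearMap.proj (R := ℝ) (φ := fun _ : Fin (d + 1) => ℝ) α with hP
    have h3 : HasFDerivAt (fun y : Fin (d + 1) → ℝ => y α) P x := P.hasFDerivAt
    have h4 : L.comp (fderiv ℝ U x) = P := h2.unique h3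
    have h5 : L (fderiv ℝ U x (Pi.single β 1))
        = P ((Pi.single β (1 : ℝ) : Fin (d + 1) → ℝ)) := by
      rw [← h4]
      rfl
    have h6 : (T β).1 (Fin.castAdd k α) = L (fderiv ℝ U x (Pi.single β 1)) := rfl
    rw [h6, h5]
    show (Pi.single β (1 : ℝ) : Fin (d + 1) → ℝ) α = _
    rw [Pi.single_apply]
  set wv : Fin (p' + 1) → Phase (d + 1) k := fun j => fderiv ℝ U x (v j) with hwv
  have hw : ∀ j, wv j = ∑ α : Fin (d + 1), v j α • T α := by
    intro j
    have hvj : v j = ∑ α : Fin (d + 1), v j α • (Pi.single α (1 : ℝ) : Fin (d + 1) → ℝ) := by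
      funext β
      rw [Finset.sum_apply]
      simp only [Pi.smul_apply, Pi.single_apply, smul_eq_mul, mul_ite, mul_one, mul_zero]
      simp
    calc wv j = fderiv ℝ U x (∑ α : Fin (d + 1), v j α • (Pi.single α (1 : ℝ) : Fin (d + 1) → ℝ)) := by
          rw [hwv, ← hvj]
      _ = ∑ α : Fin (d + 1), v j α • fderiv ℝ U x (Pi.single α 1) := by
          rw [map_sum]
          exact Finset.sum_congr rfl fun α _ => (fderiv ℝ U x).map_smul _ _
      _ = ∑ α : Fin (d + 1), v j α • T α := rfl
  obtain ⟨c₀, hc₀⟩ := hX (U x)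
  obtain ⟨c₁, hc₁⟩ := hHam x
  set H' : Phase (d + 1) k → ℝ := fun m' => fderiv ℝ H (U x) m' with hH'def
  have hH' : ContDiff ℝ (⊤ : ℕ∞) H' := (fderiv ℝ H (U x)).contDiff
  have hfH' : ∀ m', fderiv ℝ H' m' = fderiv ℝ H (U x) := fun m' =>
    (fderiv ℝ H (U x)).fderiv
  have ham1 : IsHamiltonian d k r H' (fun _ => X (U x)) := by
    intro m'
    refine ⟨c₀, fun V => ?_⟩
    rw [show fderiv ℝ H' m' = fderiv ℝ H (U x) from hfH' m']
    exact hc₀ V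
  have ham2 : IsHamiltonian d k 1 H' (fun _ _ => T) := by
    intro m'
    refine ⟨c₁, fun V => ?_⟩
    rw [show fderiv ℝ H' m' = fderiv ℝ H (U x) from hfH' m']
    rw [Fin.sum_univ_one]
    exact hc₁ V
  have hkey := hadm H' hH' r 1 (fun _ => X (U x)) (fun _ _ => T) ham1 ham2 (U x) wv
  have hXX : sharpGen d k p' r hp X lam (U x) wv
      = sharpGen d k p' r hp (fun _ => X (U x)) lam (U x) wv := rfl
  rw [← dLamAlt_apply lam hlam (U x), hXX, hkey,
    sharp_one hp lam hlam (U x) T hT wv v hw]
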